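/- arXiv:2602.12571 — 4 statements merged into one kernel-verified Lean document; each statement's English description precedes it below -/
import Mathlib

section
/- Let N be a countable set, (E_k)_{k∈N} i.i.d. unit exponentials, and for probability measures μ, ν on N define L_μ = argmin_k E_k/μ(k) and L_ν = argmin_k E_k/ν(k). Then P(L_μ ≠ L_ν) ≤ 2·d_TV(μ,ν)/(1 + d_TV(μ,ν)) ≤ 2·d_TV(μ,ν). -/
/-!
Write `d = d_TV(p, q)`, so that `∑ max (p j) (q j) = 1 + d` and `∑ min (p j) (q j) = 1 - d`.
Fix a state `k`, put `m = min (p k) (q k)` and `M j = max (p j) (q j)`. If `E k / m < E j / M j`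
for every `j ≠ k`, then `k` wins both races, i.e. `L_p = L_q = k`. For a unit exponential `X`
independent of i.i.d. unit exponentials `Y j`, conditioning on `X = x` gives
`P(∀ j, c j X < Y j) = E[exp(-(∑ c) X)] = 1 / (1 + ∑ c)`; with `c j = M j / m` this event has
probability `m / (m + ∑_{j ≠ k} M j) ≥ m / (1 + d)`. Summing over `k`,
`P(L_p = L_q) ≥ (1 - d) / (1 + d)`.
-/

open MeasureTheory ProbabilityTheory Real Set

lemma expMeasure_eq_withDensity (r : ℝ) :
    expMeasure r = volume.withDensity (exponentialPDF r) := rfl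

lemma measurable_exponentialPDF (r : ℝ) : Measurable (exponentialPDF r) :=
  (measurable_exponentialPDFReal r).ennreal_ofReal

lemma ae_nonneg_expMeasure (r : ℝ) : ∀ᵐ x ∂expMeasure r, 0 ≤ x := by
  rw [expMeasure_eq_withDensity, ae_withDensity_iff (measurable_exponentialPDF r)]
  filter_upwards with x hx
  by_contra hneg
  exact hx (exponentialPDF_of_neg (not_le.1 hneg))

lemma expMeasure_Ioi {r x : ℝ} (hr : 0 < r) (hx : 0 ≤ x) :
    expMeasure r (Ioi x) = ENNReal.ofReal (rexp (-(r * x))) := by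
  have := isProbabilityMeasure_expMeasure hr
  rw [← compl_Iic, prob_compl_eq_one_sub measurableSet_Iic, ← ofReal_cdf, cdf_expMeasure_eq hr,
    if_pos hx, ← ENNReal.ofReal_one,
    ← ENNReal.ofReal_sub _ (sub_nonneg.2 (exp_le_one_iff.2 (neg_nonpos.2 (mul_nonneg hr.le hx)))),
    sub_sub_cancel]

lemma hasLaw_expMeasure_one_of_cdf {Ω : Type*} [MeasurableSpace Ω] {μ : Measure Ω}
    [IsProbabilityMeasure μ] {X : Ω → ℝ} (hX : Measurable X)
    (hcdf : ∀ x : ℝ, 0 ≤ x → μ {ω | X ω ≤ x} = ENNReal.ofReal (1 - rexp (-x))) :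
    HasLaw X (expMeasure 1) μ := by
  have := isProbabilityMeasure_expMeasure one_pos
  refine ⟨hX.aemeasurable, Measure.ext_of_Iic _ _ fun x ↦ ?_⟩
  rw [Measure.map_apply hX measurableSet_Iic, ← ofReal_cdf, cdf_expMeasure_eq one_pos]
  split_ifs with hx
  · rw [one_mul]; exact hcdf x hx
  · rw [ENNReal.ofReal_zero]
    refine measure_mono_null (fun ω (hω : X ω ≤ x) ↦ ?_) (by simpa using hcdf 0 le_rfl)
    exact hω.trans (not_le.1 hx).le

lemma lintegral_exp_neg_mul_expMeasure {r T : ℝ} (hr : 0 < r) (hT : 0 ≤ T) :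
    ∫⁻ x, ENNReal.ofReal (rexp (-(T * x))) ∂expMeasure r = ENNReal.ofReal (r / (r + T)) := by
  have hrT : 0 < r + T := by linarith
  have hpdf x : exponentialPDF r x * ENNReal.ofReal (rexp (-(T * x)))
      = ENNReal.ofReal (r / (r + T)) * exponentialPDF (r + T) x := by
    rw [exponentialPDF_eq, exponentialPDF_eq]
    split_ifs
    · rw [← ENNReal.ofReal_mul (by positivity), ← ENNReal.ofReal_mul (by positivity)]
      congr 1
      field_simp
      rw [← Real.exp_add]
      ring_nf
    · simp
  rw [expMeasure_eq_withDensity, lintegral_withDensity_eq_lintegral_mul _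
    (measurable_exponentialPDF r) (by fun_prop)]
  simp only [Pi.mul_apply, hpdf]
  rw [lintegral_const_mul _ (measurable_exponentialPDF _),
    lintegral_exponentialPDF_eq_one hrT, mul_one]

lemma HasSum.hasProd_ofReal_exp {ι : Type*} {f : ι → ℝ} {a : ℝ} (h : HasSum f a) :
    HasProd (fun i ↦ ENNReal.ofReal (rexp (f i))) (ENNReal.ofReal (rexp a)) :=
  ((ENNReal.continuous_ofReal.tendsto _).comp h.rexp).congr fun _ ↦
    ENNReal.ofReal_prod_of_nonneg fun i _ ↦ (exp_pos (f i)).le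

section CompetingExponentials

variable {ι : Type*} [Countable ι] {c : ι → ℝ} {T : ℝ}

lemma measurableSet_setOf_forall_mul_lt :
    MeasurableSet {z : ℝ × (ι → ℝ) | ∀ j, c j * z.1 < z.2 j} := by
  simp only [ofPred_forall]
  exact MeasurableSet.iInter fun j ↦ measurableSet_lt (by fun_prop) (by fun_prop)

lemma infinitePi_expMeasure_forall_mul_lt (hc : ∀ j, 0 ≤ c j) (hT : HasSum c T) {x : ℝ}
    (hx : 0 ≤ x) :
    Measure.infinitePi (fun _ : ι ↦ expMeasure 1) {y | ∀ j, c j * x < y j}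
      = ENNReal.ofReal (rexp (-(T * x))) := by
  have := isProbabilityMeasure_expMeasure one_pos
  have hset : {y : ι → ℝ | ∀ j, c j * x < y j} = univ.pi fun j ↦ Ioi (c j * x) := by
    ext y; simp
  rw [hset, Measure.infinitePi_pi_univ _ fun _ ↦ measurableSet_Ioi]
  simp_rw [expMeasure_Ioi one_pos (mul_nonneg (hc _) hx), one_mul]
  exact ((hT.mul_right x).neg.hasProd_ofReal_exp).tprod_eq

lemma expMeasure_prod_infinitePi_forall_mul_lt (hc : ∀ j, 0 ≤ c j) (hT : HasSum c T) :
    ((expMeasure 1).prod (Measure.infinitePi fun _ : ι ↦ expMeasure 1))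
        {z | ∀ j, c j * z.1 < z.2 j} = ENNReal.ofReal (1 / (1 + T)) := by
  have := isProbabilityMeasure_expMeasure one_pos
  rw [Measure.prod_apply measurableSet_setOf_forall_mul_lt,
    ← lintegral_exp_neg_mul_expMeasure one_pos (hT.nonneg hc)]
  refine lintegral_congr_ae ?_
  filter_upwards [ae_nonneg_expMeasure 1] with x hx
  exact infinitePi_expMeasure_forall_mul_lt hc hT hx

variable {Ω : Type*} [MeasurableSpace Ω] {μ : Measure Ω} [IsProbabilityMeasure μ]

lemma measure_forall_mul_lt_of_indepFun {X : Ω → ℝ} {Y : ι → Ω → ℝ}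
    (hX : HasLaw X (expMeasure 1) μ) (hY : ∀ j, HasLaw (Y j) (expMeasure 1) μ)
    (hYindep : iIndepFun Y μ) (hXY : IndepFun X (fun ω j ↦ Y j ω) μ)
    (hc : ∀ j, 0 ≤ c j) (hT : HasSum c T) :
    μ {ω | ∀ j, c j * X ω < Y j ω} = ENNReal.ofReal (1 / (1 + T)) := by
  have hYlaw := hYindep.hasLaw_infinitePi hY
    (aemeasurable_pi_lambda _ fun j ↦ (hY j).aemeasurable)
  rw [← expMeasure_prod_infinitePi_forall_mul_lt hc hT]
  exact ((indepFun_iff_hasLaw_prodMk_prod hX hYlaw).1 hXY).measure_eq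
    (p := fun z ↦ ∀ j, c j * z.1 < z.2 j) measurableSet_setOf_forall_mul_lt

end CompetingExponentials

lemma ProbabilityTheory.iIndepFun.indepFun_compl_singleton {Ω ι β : Type*} [MeasurableSpace Ω]
    [MeasurableSpace β] {μ : Measure Ω} {E : ι → Ω → β} (hE : iIndepFun E μ)
    (hmeas : ∀ i, Measurable (E i)) (k : ι) :
    IndepFun (E k) (fun ω (j : ↥({k}ᶜ : Set ι)) ↦ E j ω) μ := by
  have h := indep_biSup_compl (fun i ↦ (hmeas i).comap_le) hE.iIndep {k}
  have hrest : Measurable[⨆ i ∈ ({k}ᶜ : Set ι), MeasurableSpace.comap (E i) inferInstance]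
      fun ω (j : ↥({k}ᶜ : Set ι)) ↦ E j ω :=
    (@measurable_pi_iff _ _ _ (_) _ _).2 fun j ↦ (comap_measurable (E j)).mono
      (le_biSup (fun i ↦ MeasurableSpace.comap (E i) _) j.2) le_rfl
  rw [IndepFun_iff_Indep]
  exact indep_of_indep_of_le h (le_biSup (fun i ↦ MeasurableSpace.comap (E i) _) rfl)
    hrest.comap_le

section Sums

variable {ι : Type*} {p q : ι → ℝ} {a b s : ℝ}

lemma summable_abs_sub_of_nonneg (hp0 : ∀ k, 0 ≤ p k) (hq0 : ∀ k, 0 ≤ q k) (hp : Summable p)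
    (hq : Summable q) : Summable fun k ↦ |p k - q k| :=
  (hp.add hq).of_nonneg_of_le (fun _ ↦ abs_nonneg _) fun k ↦
    (abs_sub _ _).trans_eq (by rw [abs_of_nonneg (hp0 k), abs_of_nonneg (hq0 k)])

lemma hasSum_max_of_hasSum_abs_sub (hp : HasSum p a) (hq : HasSum q b)
    (hs : HasSum (fun k ↦ |p k - q k|) s) :
    HasSum (fun k ↦ max (p k) (q k)) ((a + b + s) / 2) := by
  have h k : max (p k) (q k) = (p k + q k + |p k - q k|) / 2 := by
    linarith [min_add_max (p k) (q k), max_sub_min_eq_abs' (p k) (q k)]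
  simp_rw [h]
  exact ((hp.add hq).add hs).div_const 2

lemma hasSum_min_of_hasSum_abs_sub (hp : HasSum p a) (hq : HasSum q b)
    (hs : HasSum (fun k ↦ |p k - q k|) s) :
    HasSum (fun k ↦ min (p k) (q k)) ((a + b - s) / 2) := by
  have h k : min (p k) (q k) = (p k + q k - |p k - q k|) / 2 := by
    linarith [min_add_max (p k) (q k), max_sub_min_eq_abs' (p k) (q k)]
  simp_rw [h]
  exact ((hp.add hq).sub hs).div_const 2

end Sums

lemma measure_setOf_eq_eq_tsum {Ω α : Type*} [MeasurableSpace Ω] [MeasurableSpace α]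
    [MeasurableSingletonClass α] [Countable α] {μ : Measure Ω} {f g : Ω → α}
    (hf : Measurable f) (hg : Measurable g) :
    μ {ω | f ω = g ω} = ∑' a, μ {ω | f ω = a ∧ g ω = a} := by
  have hunion : {ω | f ω = g ω} = ⋃ a, {ω | f ω = a ∧ g ω = a} := by
    ext ω
    simp only [mem_ofPred_eq, mem_iUnion]
    exact ⟨fun h ↦ ⟨g ω, h, rfl⟩, fun ⟨a, hfa, hga⟩ ↦ hfa.trans hga.symm⟩
  rw [hunion]
  refine measure_iUnion (fun a b hab ↦ disjoint_left.2 fun ω ha hb ↦ hab ?_) fun a ↦ ?_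
  · exact ha.1.symm.trans hb.1
  · exact (hf (measurableSet_singleton a)).inter (hg (measurableSet_singleton a))

lemma measureReal_setOf_ne_le_one_sub {Ω α : Type*} [MeasurableSpace Ω] [MeasurableSpace α]
    [MeasurableSingletonClass α] [Countable α] {μ : Measure Ω} [IsProbabilityMeasure μ]
    {f g : Ω → α} (hf : Measurable f) (hg : Measurable g) {a : ℝ}
    (ha : ENNReal.ofReal a ≤ μ {ω | f ω = g ω}) : μ.real {ω | f ω ≠ g ω} ≤ 1 - a := by
  rw [show {ω | f ω ≠ g ω} = {ω | f ω = g ω}ᶜ from rfl,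
    probReal_compl_eq_one_sub (measurableSet_eq_fun hf hg)]
  have ha' : a ≤ μ.real {ω | f ω = g ω} :=
    (ENNReal.ofReal_le_iff_le_toReal (measure_ne_top _ _)).1 ha
  linarith

section RaceCoupling

variable {N : Type*}

/-- The paper's `L_p`: `L` is the strict argmin of `k ↦ E k / p k` over the support of `p`. -/
def IsArgminRatio (E p : N → ℝ) (L : N) : Prop :=
  0 < p L ∧ ∀ k, 0 < p k → k ≠ L → E L / p L < E k / p k

lemma IsArgminRatio.eq_of_forall_mul_lt {E p M : N → ℝ} {L k : N} {m : ℝ}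
    (hL : IsArgminRatio E p L) (hE : ∀ j, 0 ≤ E j) (hm : 0 < m) (hmk : m ≤ p k)
    (hpM : ∀ j, p j ≤ M j) (hwin : ∀ j ≠ k, M j / m * E k < E j) : L = k := by
  by_contra hLk
  have hML : 0 < M L := hL.1.trans_le (hpM L)
  have hkL : E k / m < E L / M L := by
    have hwL := hwin L hLk
    rw [div_mul_eq_mul_div, div_lt_iff₀ hm] at hwL
    rw [div_lt_div_iff₀ hm hML]
    linarith
  exact lt_irrefl (E L / p L) <| calc
    E L / p L < E k / p k := hL.2 k (hm.trans_le hmk) (Ne.symm hLk)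
    _ ≤ E k / m := div_le_div_of_nonneg_left (hE k) hm hmk
    _ < E L / M L := hkL
    _ ≤ E L / p L := div_le_div_of_nonneg_left (hE L) hL.1 (hpM L)

variable {Ω : Type*} [MeasurableSpace Ω] {μ : Measure Ω} [IsProbabilityMeasure μ]
  {E : N → Ω → ℝ} {p q : N → ℝ} {Lp Lq : Ω → N} {S : ℝ}

lemma ofReal_min_div_le_measure_eq_and_eq [Countable N]
    (hE : ∀ j, HasLaw (E j) (expMeasure 1) μ) (hEmeas : ∀ j, Measurable (E j))
    (hEindep : iIndepFun E μ) (hp0 : ∀ j, 0 ≤ p j)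
    (hmax : HasSum (fun j ↦ max (p j) (q j)) S)
    (hLp : ∀ᵐ ω ∂μ, IsArgminRatio (E · ω) p (Lp ω))
    (hLq : ∀ᵐ ω ∂μ, IsArgminRatio (E · ω) q (Lq ω)) (k : N) :
    ENNReal.ofReal (min (p k) (q k) / S) ≤ μ {ω | Lp ω = k ∧ Lq ω = k} := by
  set m := min (p k) (q k)
  set M := fun j ↦ max (p j) (q j)
  rcases le_or_gt m 0 with hm | hm
  · rw [ENNReal.ofReal_of_nonpos (div_nonpos_of_nonpos_of_nonneg hm (hmax.nonneg
      fun j ↦ (hp0 j).trans (le_max_left _ _)))]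
    exact zero_le
  have hM0 j : 0 ≤ M j := (hp0 j).trans (le_max_left _ _)
  have hMk : M k ≤ S := le_hasSum hmax k fun j _ ↦ hM0 j
  have hmM : m ≤ M k := min_le_max
  have hT : HasSum (fun j : ↥({k}ᶜ : Set N) ↦ M j / m) ((S - M k) / m) :=
    ((hasSum_singleton k M).hasSum_compl_iff.2 (by rwa [add_sub_cancel])).div_const m
  have hE0 : ∀ᵐ ω ∂μ, ∀ j, 0 ≤ E j ω := ae_all_iff.2 fun j ↦
    ae_of_ae_map (hE j).aemeasurable ((hE j).map_eq ▸ ae_nonneg_expMeasure 1)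
  calc ENNReal.ofReal (m / S)
      ≤ ENNReal.ofReal (1 / (1 + (S - M k) / m)) := by
        refine ENNReal.ofReal_le_ofReal ?_
        rw [show 1 / (1 + (S - M k) / m) = m / (m + (S - M k)) by field_simp]
        exact div_le_div_of_nonneg_left hm.le (by linarith) (by linarith)
    _ = μ {ω | ∀ j : ↥({k}ᶜ : Set N), M j / m * E k ω < E j ω} :=
        (measure_forall_mul_lt_of_indepFun (Y := fun j : ↥({k}ᶜ : Set N) ↦ E j) (hE k)
          (fun j ↦ hE j) (hEindep.precomp Subtype.val_injective)
          (hEindep.indepFun_compl_singleton hEmeas k)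
          (fun j ↦ div_nonneg (hM0 j) hm.le) hT).symm
    _ ≤ μ {ω | Lp ω = k ∧ Lq ω = k} := by
        refine measure_mono_ae ?_
        filter_upwards [hLp, hLq, hE0] with ω hωp hωq hω0 hwin
        have hwin' : ∀ j ≠ k, M j / m * E k ω < E j ω := fun j hj ↦ hwin ⟨j, hj⟩
        exact ⟨hωp.eq_of_forall_mul_lt hω0 hm (min_le_left _ _) (fun _ ↦ le_max_left _ _)
            hwin',
          hωq.eq_of_forall_mul_lt hω0 hm (min_le_right _ _) (fun _ ↦ le_max_right _ _) hwin'⟩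

end RaceCoupling

/-- pairwise-optimal grand coupling bound: Let `(E_k)_{k∈N}` be i.i.d. unit
exponentials, `p, q` probability vectors on `N`, and let `L_p, L_q` be the (a.s. unique)
argmins of `k ↦ E_k/p(k)` resp. `k ↦ E_k/q(k)` over the respective supports. Then
`P(L_p ≠ L_q) ≤ 2·d_TV(p,q)/(1 + d_TV(p,q)) ≤ 2·d_TV(p,q)`, where
`d_TV(p,q) = (1/2)Σ_k |p(k) − q(k)|`. -/
theorem stmt7 {Ω N : Type} [MeasurableSpace Ω] [MeasurableSpace N]
    [MeasurableSingletonClass N] [Countable N]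
    (μ : Measure Ω) [IsProbabilityMeasure μ]
    (E : N → Ω → ℝ) (hEmeas : ∀ k, Measurable (E k))
    (hEindep : iIndepFun E μ)
    (hEexp : ∀ k, ∀ x : ℝ, 0 ≤ x →
      μ {ω | E k ω ≤ x} = ENNReal.ofReal (1 - Real.exp (-x)))
    (p q : N → ℝ) (hp0 : ∀ k, 0 ≤ p k) (hp1 : HasSum p 1)
    (hq0 : ∀ k, 0 ≤ q k) (hq1 : HasSum q 1)
    (Lp Lq : Ω → N) (hLpmeas : Measurable Lp) (hLqmeas : Measurable Lq)
    (hpargmin : ∀ᵐ ω ∂μ, 0 < p (Lp ω) ∧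
      ∀ k, 0 < p k → k ≠ Lp ω → E (Lp ω) ω / p (Lp ω) < E k ω / p k)
    (hqargmin : ∀ᵐ ω ∂μ, 0 < q (Lq ω) ∧
      ∀ k, 0 < q k → k ≠ Lq ω → E (Lq ω) ω / q (Lq ω) < E k ω / q k) :
    (μ {ω | Lp ω ≠ Lq ω}).toReal
        ≤ 2 * ((1 / 2) * ∑' k, |p k - q k|) / (1 + (1 / 2) * ∑' k, |p k - q k|)
      ∧ 2 * ((1 / 2) * ∑' k, |p k - q k|) / (1 + (1 / 2) * ∑' k, |p k - q k|)
        ≤ 2 * ((1 / 2) * ∑' k, |p k - q k|) := by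
  set d := (1 / 2 : ℝ) * ∑' k, |p k - q k|
  have hd : HasSum (fun k ↦ |p k - q k|) (2 * d) := by
    rw [show 2 * d = ∑' k, |p k - q k| by ring]
    exact (summable_abs_sub_of_nonneg hp0 hq0 hp1.summable hq1.summable).hasSum
  have hd0 : 0 ≤ d := by linarith [hd.nonneg fun k ↦ abs_nonneg (p k - q k)]
  have hmax : HasSum (fun k ↦ max (p k) (q k)) (1 + d) := by
    convert hasSum_max_of_hasSum_abs_sub hp1 hq1 hd using 1; ring
  have hmin : HasSum (fun k ↦ min (p k) (q k)) (1 - d) := by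
    convert hasSum_min_of_hasSum_abs_sub hp1 hq1 hd using 1; ring
  have hagree : ENNReal.ofReal ((1 - d) / (1 + d)) ≤ μ {ω | Lp ω = Lq ω} := by
    rw [measure_setOf_eq_eq_tsum hLpmeas hLqmeas, ← (hmin.div_const _).tsum_eq,
      ENNReal.ofReal_tsum_of_nonneg (fun k ↦ div_nonneg (le_min (hp0 k) (hq0 k)) (by linarith))
        (hmin.div_const _).summable]
    exact ENNReal.tsum_le_tsum <| ofReal_min_div_le_measure_eq_and_eq
      (fun k ↦ hasLaw_expMeasure_one_of_cdf (hEmeas k) (hEexp k)) hEmeas hEindep hp0 hmax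
      hpargmin hqargmin
  refine ⟨?_, div_le_self (by positivity) (by linarith)⟩
  calc (μ {ω | Lp ω ≠ Lq ω}).toReal ≤ 1 - (1 - d) / (1 + d) :=
        measureReal_setOf_ne_le_one_sub hLpmeas hLqmeas hagree
    _ = 2 * d / (1 + d) := by field_simp; ring
end

section
/- Let G = (N,E) be a finite graph and suppose (μ_i)_{i∈N} are probability measures on N with μ_i(B_r(i)) = 1 for all i, admitting a coupling (L_i)_{i∈N} on a common probability space with L_i ~ μ_i. Let D = {(i,j) ∈ E : L_i ≠ L_j} (a random set of edges). Then almost surely every connected component of (N, E∖D) has radius at most r; in particular if E[|D|] ≤ δ|E| then there is a deterministic D₀ ⊆ E with |D₀| ≤ δ|E| witnessing (δ,r)-amenability of G. -/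
open MeasureTheory ProbabilityTheory Finset

/-- Ordered neighbor pairs of `G`. -/
def oEdges {V : Type} [Fintype V] (G : SimpleGraph V) [DecidableRel G.Adj] :
    Finset (V × V) :=
  Finset.univ.filter (fun p => G.Adj p.1 p.2)

/-- The graph obtained from `G` by deleting the (ordered) edges in `D`. -/
def delGraph {V : Type} (G : SimpleGraph V) (D : Finset (V × V)) : SimpleGraph V :=
  G.deleteEdges {e | ∃ p ∈ D, e = s(p.1, p.2)}

/-- `G` is `(δ,r)`-amenable. -/
def IsAmenable {V : Type} [Fintype V] (G : SimpleGraph V) [DecidableRel G.Adj]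
    (δ : ℝ) (r : ℕ) : Prop :=
  ∃ D : Finset (V × V),
    (∀ p ∈ D, G.Adj p.1 p.2) ∧
    ((D.card : ℝ) ≤ δ * ((oEdges G).card : ℝ)) ∧
    ∀ i : V, ∃ v : V, ∀ j : V, (delGraph G D).Reachable i j → G.dist v j ≤ r

/-- On each connected component of the deleted graph, the leader map is constant. -/
lemma leader_const {V : Type} [Fintype V] [DecidableEq V] (G : SimpleGraph V)
    [DecidableRel G.Adj] (f : V → V) {i j : V}
    (h : (delGraph G ((oEdges G).filter (fun p => f p.1 ≠ f p.2))).Reachable i j) :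
    f i = f j := by
  obtain ⟨w⟩ := h
  induction w with
  | nil => rfl
  | cons hadj _ ih =>
    rename_i a b c _
    rw [delGraph, SimpleGraph.deleteEdges_adj] at hadj
    obtain ⟨hG, hne⟩ := hadj
    have hab : f a = f b := by
      by_contra hne'
      exact hne ⟨(a, b), Finset.mem_filter.2
        ⟨Finset.mem_filter.2 ⟨Finset.mem_univ _, hG⟩, hne'⟩, rfl⟩
    rw [hab, ih]

/-- If every vertex's leader is within distance `r`, components have radius `≤ r`. -/
lemma radius_le {V : Type} [Fintype V] [DecidableEq V] (G : SimpleGraph V)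
    [DecidableRel G.Adj] (r : ℕ) (f : V → V) (hf : ∀ i, G.dist i (f i) ≤ r) :
    ∀ i : V, ∃ v : V, ∀ j : V,
      (delGraph G ((oEdges G).filter (fun p => f p.1 ≠ f p.2))).Reachable i j →
        G.dist v j ≤ r := by
  intro i
  refine ⟨f i, fun j hreach => ?_⟩
  rw [leader_const G f hreach, SimpleGraph.dist_comm]
  exact hf j

/-- Let `(μ_i)_{i∈N}` be probability measures on the vertex set of a finite
graph `G` with `μ_i(B_r(i)) = 1`, coupled on a common probability space by random leader
choices `L_i ~ μ_i`. Let `D = {(i,j) ∈ E : L_i ≠ L_j}` be the random set of deleted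
edges. Then almost surely every connected component of `(N, E∖D)` has radius at most `r`;
and if moreover `E[|D|] ≤ δ|E|`, then `G` is `(δ,r)`-amenable. -/
theorem stmt9 {V Ω : Type} [Fintype V] [DecidableEq V] [MeasurableSpace V]
    [MeasurableSingletonClass V]
    (G : SimpleGraph V) [DecidableRel G.Adj] (r : ℕ)
    [MeasurableSpace Ω] (μ : Measure Ω) [IsProbabilityMeasure μ]
    (ν : V → Measure V) (hν : ∀ i, IsProbabilityMeasure (ν i))
    (hball : ∀ i, ν i {j | G.dist i j ≤ r} = 1)
    (L : V → Ω → V) (hLmeas : ∀ i, Measurable (L i))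
    (hLdist : ∀ i, Measure.map (L i) μ = ν i) :
    (∀ᵐ ω ∂μ, ∀ i : V, ∃ v : V, ∀ j : V,
        (delGraph G ((oEdges G).filter (fun p => L p.1 ω ≠ L p.2 ω))).Reachable i j →
          G.dist v j ≤ r)
      ∧ ∀ δ : ℝ,
          (∫ ω, (((oEdges G).filter (fun p => L p.1 ω ≠ L p.2 ω)).card : ℝ) ∂μ
              ≤ δ * ((oEdges G).card : ℝ)) →
            IsAmenable G δ r := by
  -- almost surely, every leader is within distance r
  have hae : ∀ᵐ ω ∂μ, ∀ i : V, G.dist i (L i ω) ≤ r := by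
    rw [ae_all_iff]
    intro i
    have hmeas : MeasurableSet {j : V | G.dist i j ≤ r} :=
      (Set.toFinite _).measurableSet
    have h1 : μ (L i ⁻¹' {j : V | G.dist i j ≤ r}) = 1 := by
      rw [← Measure.map_apply (hLmeas i) hmeas, hLdist i, hball i]
    have h0 : μ (L i ⁻¹' {j : V | G.dist i j ≤ r})ᶜ = 0 := by
      rw [prob_compl_eq_zero_iff ((hLmeas i) hmeas)]
      exact h1
    exact (ae_iff).2 h0
  refine ⟨hae.mono (fun ω hω => radius_le G r (fun j => L j ω) hω), fun δ hδ => ?_⟩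
  -- integrability of the edge count
  set f : Ω → ℝ := fun ω => (((oEdges G).filter (fun p => L p.1 ω ≠ L p.2 ω)).card : ℝ)
    with hf
  have hfm : Measurable f := by
    have heq : f = fun ω => ∑ p ∈ oEdges G, if L p.1 ω ≠ L p.2 ω then (1 : ℝ) else 0 := by
      funext ω
      show ((Finset.filter _ _).card : ℝ) = _
      rw [Finset.card_filter]
      push_cast
      rfl
    rw [heq]
    refine Finset.measurable_sum _ (fun p _ => Measurable.ite ?_ measurable_const
      measurable_const)
    have : {ω | L p.1 ω ≠ L p.2 ω} =
        (fun ω => (L p.1 ω, L p.2 ω)) ⁻¹' {q : V × V | q.1 ≠ q.2} := rfl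
    rw [this]
    exact ((hLmeas p.1).prodMk (hLmeas p.2)) (Set.toFinite _).measurableSet
  have hfint : Integrable f μ := by
    refine Integrable.mono' (integrable_const ((oEdges G).card : ℝ))
      hfm.aestronglyMeasurable (ae_of_all _ fun ω => ?_)
    rw [Real.norm_eq_abs, abs_of_nonneg (by positivity)]
    show ((Finset.filter _ _).card : ℝ) ≤ _
    exact_mod_cast Finset.card_filter_le _ _
  -- choose a good ω
  obtain ⟨ω, hωmem, hωle⟩ := exists_notMem_null_le_integral hfint
    ((ae_iff).1 hae)
  simp only [Set.mem_setOf_eq, not_not] at hωmem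
  refine ⟨(oEdges G).filter (fun p => L p.1 ω ≠ L p.2 ω),
    fun p hp => (Finset.mem_filter.1 (Finset.mem_filter.1 hp).1).2,
    hωle.trans hδ,
    radius_le G r (fun j => L j ω) hωmem⟩
end

section
/- On the cycle graph with n vertices, n a multiple of 2r+1 and n ≥ 5r, any action-symmetric r-local probability distribution μ on {−1,+1}^n has average inefficiency at least 1/(2r+1), where average inefficiency is (1/n)Σ_{i} E[|a_i − a_{i+1 mod n}|]. -/
/-!
For signs, `|x - y| = 1 - x y`. Symmetry gives `E a_i = 0`, and since `n ≥ 2(2r+1)` the vertices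
`i` and `i + 2r + 1` are at distance more than `2r`, so locality makes `a_i` and `a_{i+2r+1}`
independent; hence `E |a_i - a_{i+2r+1}| = 1`. By the triangle inequality along the path between
them, every window of `2r + 1` consecutive edges carries total expected inefficiency at least `1`.
Summing over the `n` windows counts every edge `2r + 1` times.
-/

open MeasureTheory ProbabilityTheory Finset

/-- The cycle graph on `ZMod n`: `i` adjacent to `i ± 1`. -/
def cycleGraph (n : ℕ) : SimpleGraph (ZMod n) :=
  SimpleGraph.fromRel (fun i j => j = i + 1)

namespace cycleGraph

variable {n : ℕ}

lemma reachable_add_one (i : ZMod n) : (cycleGraph n).Reachable i (i + 1) := by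
  by_cases h : i = i + 1
  · rw [← h]
  · exact SimpleGraph.Adj.reachable ⟨h, Or.inl rfl⟩

lemma reachable_add_natCast (i : ZMod n) (m : ℕ) : (cycleGraph n).Reachable i (i + m) := by
  induction m with
  | zero => simp
  | succ m ih => simpa [add_assoc] using ih.trans (reachable_add_one _)

lemma exists_intCast_of_walk {i j : ZMod n} (w : (cycleGraph n).Walk i j) :
    ∃ s : ℤ, |s| ≤ w.length ∧ j = i + s := by
  induction w with
  | nil => exact ⟨0, by simp⟩
  | @cons u v _ huv _ ih =>
    obtain ⟨s, hs, rfl⟩ := ih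
    rcases huv.2 with rfl | rfl
    · refine ⟨s + 1, ?_, by push_cast; ring⟩
      simp only [SimpleGraph.Walk.length_cons, Nat.cast_add, Nat.cast_one]
      linarith [abs_add_le s 1, abs_one (α := ℤ)]
    · refine ⟨s - 1, ?_, by push_cast; ring⟩
      simp only [SimpleGraph.Walk.length_cons, Nat.cast_add, Nat.cast_one]
      linarith [abs_sub s 1, abs_one (α := ℤ)]

lemma le_dist_add_natCast {m : ℕ} (hm : 2 * m ≤ n) (i : ZMod n) :
    m ≤ (cycleGraph n).dist i (i + m) := by
  obtain ⟨w, hw⟩ := (reachable_add_natCast i m).exists_walk_length_eq_dist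
  obtain ⟨s, hs, hsm⟩ := exists_intCast_of_walk w
  have hdvd : (n : ℤ) ∣ m - s := by
    rw [← ZMod.intCast_zmod_eq_zero_iff_dvd]
    push_cast
    linear_combination hsm
  by_contra! hlt
  have hs' : |s| < m := by rw [hw] at hs; exact hs.trans_lt (by exact_mod_cast hlt)
  obtain ⟨hs₁, hs₂⟩ := abs_lt.mp hs'
  have := Int.le_of_dvd (by omega) hdvd
  omega

end cycleGraph

section SignVariables

variable {Ω : Type*} [MeasurableSpace Ω] {μ : Measure Ω}

lemma integral_eq_zero_of_map_eq_map_neg {X : Ω → ℝ} (hX : AEMeasurable X μ)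
    (h : μ.map X = μ.map (-X)) : ∫ ω, X ω ∂μ = 0 := by
  have hmap : ∫ ω, X ω ∂μ = ∫ ω, -X ω ∂μ := calc
    _ = ∫ x, x ∂μ.map X := (integral_map hX aestronglyMeasurable_id).symm
    _ = ∫ x, x ∂μ.map (-X) := by rw [h]
    _ = ∫ ω, -X ω ∂μ := integral_map hX.neg aestronglyMeasurable_id
  linarith [integral_neg (μ := μ) X]

lemma map_apply_eq_map_neg_apply {ι : Type*} {X : ι → Ω → ℝ} (hX : ∀ i, Measurable (X i))
    (h : μ.map (fun ω i => X i ω) = μ.map (fun ω i => -X i ω)) (i : ι) :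
    μ.map (X i) = μ.map (-X i) := by
  have := congrArg (Measure.map (fun x : ι → ℝ => x i)) h
  rwa [Measure.map_map (measurable_pi_apply i) (measurable_pi_lambda _ hX),
    Measure.map_map (measurable_pi_apply i) (measurable_pi_lambda (fun ω i => -X i ω)
      fun i => (hX i).neg)] at this

lemma integrable_of_ae_eq_neg_one_or_one [IsFiniteMeasure μ] {X : Ω → ℝ} (hX : AEStronglyMeasurable X μ)
    (hval : ∀ᵐ ω ∂μ, X ω = -1 ∨ X ω = 1) : Integrable X μ :=
  .of_bound hX 1 <| hval.mono fun ω h => by rcases h with h | h <;> simp [h]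

lemma integral_abs_sub_eq_one_of_indepFun [IsProbabilityMeasure μ] {X Y : Ω → ℝ}
    (hX : AEStronglyMeasurable X μ) (hY : AEStronglyMeasurable Y μ)
    (hXval : ∀ᵐ ω ∂μ, X ω = -1 ∨ X ω = 1) (hYval : ∀ᵐ ω ∂μ, Y ω = -1 ∨ Y ω = 1)
    (hXY : IndepFun X Y μ) (hX₀ : ∫ ω, X ω ∂μ = 0) : ∫ ω, |X ω - Y ω| ∂μ = 1 := by
  have habs : (fun ω => |X ω - Y ω|) =ᵐ[μ] fun ω => 1 - X ω * Y ω := by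
    filter_upwards [hXval, hYval] with ω hx hy
    rcases hx with hx | hx <;> rcases hy with hy | hy <;> norm_num [hx, hy]
  have hXY_int : Integrable (fun ω => X ω * Y ω) μ :=
    integrable_of_ae_eq_neg_one_or_one (hX.mul hY) <| by
      filter_upwards [hXval, hYval] with ω hx hy
      rcases hx with hx | hx <;> rcases hy with hy | hy <;> norm_num [hx, hy]
  rw [integral_congr_ae habs, integral_sub (integrable_const 1) hXY_int,
    hXY.integral_fun_mul_eq_mul_integral hX hY, hX₀]
  simp

end SignVariables

lemma card_le_card_mul_sum_of_one_le_sum_add {G ι : Type*} [AddCommGroup G] [Fintype G]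
    (f : G → ℝ) (T : Finset ι) (g : ι → G) (h : ∀ i, 1 ≤ ∑ t ∈ T, f (i + g t)) :
    (Fintype.card G : ℝ) ≤ #T * ∑ i, f i := calc
  (Fintype.card G : ℝ) = ∑ _i : G, 1 := by simp
  _ ≤ ∑ i, ∑ t ∈ T, f (i + g t) := sum_le_sum fun i _ => h i
  _ = ∑ t ∈ T, ∑ i, f (i + g t) := sum_comm
  _ = ∑ _t ∈ T, ∑ i, f i := sum_congr rfl fun t _ => Equiv.sum_comp (Equiv.addRight (g t)) f
  _ = #T * ∑ i, f i := by rw [sum_const, nsmul_eq_mul]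

/-- On the cycle with `n` vertices, where `n` is a multiple of `2r+1` and
`n ≥ 5r`, any action-symmetric, `r`-local distribution of ±1 actions `(a_i)` has average
inefficiency `(1/n)·Σ_i E[|a_i − a_{i+1}|]` at least `1/(2r+1)`. Action-symmetry says the
joint law of `(a_i)_i` is invariant under global negation; `r`-locality says the actions
on two vertex sets at pairwise graph distance `> 2r` are independent. -/
theorem stmt11 {Ω : Type} [MeasurableSpace Ω] (μ : Measure Ω) [IsProbabilityMeasure μ]
    (n r : ℕ) [NeZero n] (hmul : (2 * r + 1) ∣ n) (hn : 5 * r ≤ n) (hr : 0 < r)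
    (a : ZMod n → Ω → ℝ) (hmeas : ∀ i, Measurable (a i))
    (hval : ∀ᵐ ω ∂μ, ∀ i, a i ω = -1 ∨ a i ω = 1)
    (hsymm : Measure.map (fun ω => fun i => a i ω) μ
        = Measure.map (fun ω => fun i => -(a i ω)) μ)
    (hlocal : ∀ N₁ N₂ : Finset (ZMod n),
        (∀ i ∈ N₁, ∀ j ∈ N₂, 2 * r < (cycleGraph n).dist i j) →
        IndepFun (fun ω => fun i : ↥N₁ => a i ω) (fun ω => fun j : ↥N₂ => a j ω) μ) :
    1 / (2 * r + 1 : ℝ)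
      ≤ (1 / (n : ℝ)) * ∑ i : ZMod n, ∫ ω, |a i ω - a (i + 1) ω| ∂μ := by
  have hn' : 2 * (2 * r + 1) ≤ n := by
    obtain ⟨k, hk⟩ := hmul
    have := NeZero.ne n
    rcases k with _ | _ | k
    · omega
    · omega
    · nlinarith
  have hsign i : ∀ᵐ ω ∂μ, a i ω = -1 ∨ a i ω = 1 := hval.mono fun _ h => h i
  have hint i : Integrable (a i) μ :=
    integrable_of_ae_eq_neg_one_or_one (hmeas i).aestronglyMeasurable (hsign i)
  have hmean i : ∫ ω, a i ω ∂μ = 0 :=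
    integral_eq_zero_of_map_eq_map_neg (hmeas i).aemeasurable
      (map_apply_eq_map_neg_apply hmeas hsymm i)
  have hindep i : IndepFun (a i) (a (i + (2 * r + 1 : ℕ))) μ := by
    have h := hlocal {i} {i + (2 * r + 1 : ℕ)} <| by
      simpa using cycleGraph.le_dist_add_natCast hn' i
    exact h.comp (measurable_pi_apply ⟨i, mem_singleton_self i⟩)
      (measurable_pi_apply ⟨_, mem_singleton_self _⟩)
  have hedge i : Integrable (fun ω => |a i ω - a (i + 1) ω|) μ := ((hint _).sub (hint _)).abs
  have hwindow i :
      1 ≤ ∑ t ∈ range (2 * r + 1), ∫ ω, |a (i + t) ω - a (i + t + 1) ω| ∂μ := calc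
    1 = ∫ ω, |a i ω - a (i + (2 * r + 1 : ℕ)) ω| ∂μ :=
      (integral_abs_sub_eq_one_of_indepFun (hmeas _).aestronglyMeasurable
        (hmeas _).aestronglyMeasurable (hsign _) (hsign _) (hindep i) (hmean i)).symm
    _ ≤ ∫ ω, ∑ t ∈ range (2 * r + 1), |a (i + t) ω - a (i + t + 1) ω| ∂μ := by
      refine integral_mono ((hint _).sub (hint _)).abs
        (integrable_finsetSum _ fun t _ => hedge _) fun ω => ?_
      simpa [Real.dist_eq, add_assoc] using
        dist_le_range_sum_dist (fun t => a (i + t) ω) (2 * r + 1)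
    _ = _ := integral_finsetSum _ fun t _ => hedge _
  have hcount := card_le_card_mul_sum_of_one_le_sum_add
    (fun i => ∫ ω, |a i ω - a (i + 1) ω| ∂μ) (range (2 * r + 1)) (fun t => (t : ZMod n)) hwindow
  rw [ZMod.card, card_range] at hcount
  push_cast at hcount
  rw [div_mul_eq_mul_div, one_mul,
    div_le_div_iff₀ (by positivity) (by exact_mod_cast Nat.pos_of_neZero n)]
  linarith
end

section
/- Let G be a finite graph, let 𝒦 be a family of vertex subsets each of size f and each with boundary of size b, and suppose every vertex lies in exactly M members of 𝒦. Select each K ∈ 𝒦 independently with probability p, let D₁ be the union of the boundaries of selected sets, and let D₂ be the set of edges both of whose endpoints lie in no selected set. If G is d-regular (so |E| = d|N| as ordered pairs), then E[|D₁|] ≤ p·(M/(d·f))·b·|E| and E[|D₂|] ≤ (1−p)^M·|E|. -/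
/-!
Both bounds are first-moment computations under the product Bernoulli measure on selections, where
expectations of products of single-coordinate functions factor. The set `D₁` lies in the union of
the boundaries of the selected sets, so `E|D₁| ≤ p · Σ_K |∂K| = p |𝒦| b`; double counting vertex
memberships gives `|𝒦| f = M |N|`, and regularity gives `|E| = d |N|`. An edge of `D₂` has a tail
covered by no selected set; the tail lies in exactly `M` members of `𝒦`, so this happens with
probability `(1 - p)^M`.
-/

open Finset

/-- The boundary `∂F` of a vertex set, as ordered pairs from `F` to its complement. -/
def bdry {V : Type} [Fintype V] [DecidableEq V] (G : SimpleGraph V)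
    [DecidableRel G.Adj] (F : Finset V) : Finset (V × V) :=
  (oEdges G).filter (fun p => p.1 ∈ F ∧ p.2 ∉ F)

lemma card_oEdges {V : Type} [Fintype V] (G : SimpleGraph V) [DecidableRel G.Adj] :
    #(oEdges G) = ∑ v, G.degree v := by
  rw [oEdges, card_filter, Fintype.sum_prod_type]
  refine sum_congr rfl fun v _ => ?_
  rw [← card_filter, ← G.card_neighborFinset_eq_degree, G.neighborFinset_eq_filter]

section BernoulliSelection

variable {ι : Type*} [Fintype ι] (p : ℝ)

/-- `∑ σ, bernoulliWeight p σ * X σ` is the expectation of `X` when each index is selected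
(`σ i = true`) independently with probability `p`. -/
def bernoulliWeight (σ : ι → Bool) : ℝ :=
  ∏ i, if σ i then p else 1 - p

variable {p}

lemma bernoulliWeight_nonneg (hp0 : 0 ≤ p) (hp1 : p ≤ 1) (σ : ι → Bool) :
    0 ≤ bernoulliWeight p σ :=
  prod_nonneg fun i _ => by split <;> linarith

variable [DecidableEq ι]

lemma sum_bernoulliWeight_mul_mono (hp0 : 0 ≤ p) (hp1 : p ≤ 1)
    {X Y : (ι → Bool) → ℝ} (h : ∀ σ, X σ ≤ Y σ) :
    ∑ σ, bernoulliWeight p σ * X σ ≤ ∑ σ, bernoulliWeight p σ * Y σ :=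
  sum_le_sum fun σ _ => mul_le_mul_of_nonneg_left (h σ) (bernoulliWeight_nonneg hp0 hp1 σ)

variable (p)

lemma sum_bernoulliWeight_mul_prod (e : ι → Bool → ℝ) :
    ∑ σ, bernoulliWeight p σ * ∏ i, e i (σ i) = ∏ i, (p * e i true + (1 - p) * e i false) := by
  have hbool : ∀ i, p * e i true + (1 - p) * e i false
      = ∑ b : Bool, (if b then p else 1 - p) * e i b := fun i => by simp
  simp_rw [hbool, Fintype.prod_sum, bernoulliWeight, prod_mul_distrib]

lemma sum_bernoulliWeight_mul_ite_selected (i₀ : ι) :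
    ∑ σ, bernoulliWeight p σ * (if σ i₀ then 1 else 0) = p :=
  calc _ = ∑ σ, bernoulliWeight p σ * ∏ i, if i = i₀ then (if σ i then 1 else 0) else 1 := by
        simp only [prod_ite_eq', mem_univ, if_true]
    _ = ∏ i, if i = i₀ then p else 1 := by
        rw [sum_bernoulliWeight_mul_prod p fun i b => if i = i₀ then (if b then 1 else 0) else 1]
        exact prod_congr rfl fun i _ => by by_cases hi : i = i₀ <;> simp [hi]
    _ = p := by simp

lemma sum_bernoulliWeight_mul_ite_unselected (A : Finset ι) :
    ∑ σ, bernoulliWeight p σ * (if ∀ i ∈ A, σ i = false then 1 else 0) = (1 - p) ^ #A :=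
  calc _ = ∑ σ, bernoulliWeight p σ * ∏ i, if i ∈ A → σ i = false then 1 else 0 := by
        simp only [prod_boole, mem_univ, forall_const]
    _ = ∏ i, if i ∈ A then 1 - p else 1 := by
        rw [sum_bernoulliWeight_mul_prod p fun i b => if i ∈ A → b = false then 1 else 0]
        exact prod_congr rfl fun i _ => by by_cases hi : i ∈ A <;> simp [hi]
    _ = (1 - p) ^ #A := by simp [prod_ite_mem]

end BernoulliSelection

section ExpectedCard

variable {ι α : Type*} [Fintype ι] [DecidableEq ι] {p : ℝ}

variable (p) in
lemma sum_bernoulliWeight_mul_card_filter_unselected (s : Finset α) (A : α → Finset ι) :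
    ∑ σ, bernoulliWeight p σ * #{x ∈ s | ∀ i ∈ A x, σ i = false}
      = ∑ x ∈ s, (1 - p) ^ #(A x) := by
  simp_rw [natCast_card_filter, mul_sum]
  rw [sum_comm]
  simp_rw [sum_bernoulliWeight_mul_ite_unselected]

lemma sum_bernoulliWeight_mul_card_biUnion_le [DecidableEq α] (hp0 : 0 ≤ p) (hp1 : p ≤ 1)
    (S : ι → Finset α) :
    ∑ σ, bernoulliWeight p σ * #((univ.filter fun i => σ i = true).biUnion S)
      ≤ p * ∑ i, (#(S i) : ℝ) :=
  calc _ ≤ ∑ σ, bernoulliWeight p σ * ∑ i, (#(S i) : ℝ) * (if σ i then 1 else 0) :=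
        sum_bernoulliWeight_mul_mono hp0 hp1 fun σ => by
          simp_rw [mul_boole, ← sum_filter]
          exact_mod_cast card_biUnion_le
    _ = ∑ i, (#(S i) : ℝ) * ∑ σ, bernoulliWeight p σ * (if σ i then 1 else 0) := by
        simp_rw [mul_sum, mul_left_comm (bernoulliWeight p _)]
        exact sum_comm
    _ = p * ∑ i, (#(S i) : ℝ) := by
        simp_rw [sum_bernoulliWeight_mul_ite_selected, mul_sum, mul_comm]

end ExpectedCard

section SelectedSets

variable {V : Type} [Fintype V] [DecidableEq V] (G : SimpleGraph V) [DecidableRel G.Adj]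
  (𝒦 : Finset (Finset V)) {p : ℝ}

lemma sum_bernoulliWeight_mul_card_selected_bdry_le (hp0 : 0 ≤ p) (hp1 : p ≤ 1) :
    ∑ σ, bernoulliWeight p σ *
        #{e ∈ oEdges G | ∃ K : {K // K ∈ 𝒦}, σ K = true ∧ e ∈ bdry G K.1}
      ≤ p * ∑ K ∈ 𝒦, (#(bdry G K) : ℝ) :=
  calc _ ≤ ∑ σ, bernoulliWeight p σ *
          #((univ.filter fun K : {K // K ∈ 𝒦} => σ K = true).biUnion fun K => bdry G K.1) :=
        sum_bernoulliWeight_mul_mono hp0 hp1 fun σ => by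
          gcongr
          intro e he
          obtain ⟨-, K, hK, heK⟩ := mem_filter.1 he
          exact mem_biUnion.2 ⟨K, mem_filter.2 ⟨mem_univ _, hK⟩, heK⟩
    _ ≤ p * ∑ K : {K // K ∈ 𝒦}, (#(bdry G K.1) : ℝ) :=
        sum_bernoulliWeight_mul_card_biUnion_le hp0 hp1 _
    _ = p * ∑ K ∈ 𝒦, (#(bdry G K) : ℝ) := by
        rw [sum_coe_sort 𝒦 fun K => (#(bdry G K) : ℝ)]

lemma sum_bernoulliWeight_mul_card_uncovered_le {M : ℕ}
    (hcover : ∀ v, #{K ∈ 𝒦 | v ∈ K} = M) (hp0 : 0 ≤ p) (hp1 : p ≤ 1) :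
    ∑ σ, bernoulliWeight p σ *
        #{e ∈ oEdges G | (∀ K : {K // K ∈ 𝒦}, σ K = true → e.1 ∉ K.1) ∧
          (∀ K : {K // K ∈ 𝒦}, σ K = true → e.2 ∉ K.1)}
      ≤ (1 - p) ^ M * #(oEdges G) := by
  have hmult : ∀ v, #{K : {K // K ∈ 𝒦} | v ∈ K.1} = M := fun v => by
    rw [← hcover v, card_filter, card_filter]
    exact sum_coe_sort 𝒦 fun K => if v ∈ K then 1 else 0
  calc _ ≤ ∑ σ, bernoulliWeight p σ *
          #{e ∈ oEdges G | ∀ K ∈ univ.filter fun K : {K // K ∈ 𝒦} => e.1 ∈ K.1, σ K = false} :=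
        sum_bernoulliWeight_mul_mono hp0 hp1 fun σ => by
          gcongr with e
          rintro ⟨hfree, -⟩ K hK
          exact Bool.eq_false_iff.2 fun hσ => hfree K hσ (mem_filter.1 hK).2
    _ = ∑ e ∈ oEdges G, (1 - p) ^ M := by
        rw [sum_bernoulliWeight_mul_card_filter_unselected]
        simp_rw [hmult]
    _ = (1 - p) ^ M * #(oEdges G) := by rw [sum_const, nsmul_eq_mul, mul_comm]

end SelectedSets

theorem stmt16_general {V : Type} [Fintype V] [DecidableEq V]
    (G : SimpleGraph V) [DecidableRel G.Adj] (d : ℕ) (hd : 0 < d)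
    (hreg : ∀ v : V, G.degree v = d)
    (𝒦 : Finset (Finset V)) (f b M : ℕ) (hf : 0 < f)
    (hsize : ∀ K ∈ 𝒦, K.card = f) (hbdry : ∀ K ∈ 𝒦, (bdry G K).card = b)
    (hcover : ∀ v : V, (𝒦.filter (fun K => v ∈ K)).card = M)
    (p : ℝ) (hp0 : 0 ≤ p) (hp1 : p ≤ 1) :
    (∑ σ : {K // K ∈ 𝒦} → Bool,
        (∏ K : {K // K ∈ 𝒦}, if σ K then p else 1 - p) *
          (((oEdges G).filter (fun e =>
              ∃ K : {K // K ∈ 𝒦}, σ K = true ∧ e ∈ bdry G K.1)).card : ℝ)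
        ≤ p * ((M : ℝ) / ((d : ℝ) * (f : ℝ))) * (b : ℝ) * ((oEdges G).card : ℝ))
    ∧
    (∑ σ : {K // K ∈ 𝒦} → Bool,
        (∏ K : {K // K ∈ 𝒦}, if σ K then p else 1 - p) *
          (((oEdges G).filter (fun e =>
              (∀ K : {K // K ∈ 𝒦}, σ K = true → e.1 ∉ K.1) ∧
              (∀ K : {K // K ∈ 𝒦}, σ K = true → e.2 ∉ K.1))).card : ℝ)
        ≤ (1 - p) ^ M * ((oEdges G).card : ℝ)) := by
  refine ⟨(sum_bernoulliWeight_mul_card_selected_bdry_le G 𝒦 hp0 hp1).trans_eq ?_,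
    sum_bernoulliWeight_mul_card_uncovered_le G 𝒦 hcover hp0 hp1⟩
  have hedges : (#(oEdges G) : ℝ) = Fintype.card V * d := by
    norm_cast
    rw [card_oEdges, sum_congr rfl fun v _ => hreg v, sum_const, card_univ, smul_eq_mul]
  have hdouble : (#𝒦 * f : ℝ) = Fintype.card V * M := by
    norm_cast
    rw [← sum_const_nat hsize, sum_card hcover]
  rw [sum_congr rfl fun K hK => by rw [hbdry K hK], sum_const, nsmul_eq_mul, hedges]
  field_simp
  linear_combination (b * p : ℝ) * hdouble

/-- Let `𝒦` be a family of vertex subsets of a `d`-regular finite graph,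
each of size `f` and each with boundary of size `b`, such that every vertex lies in
exactly `M` members of `𝒦`. Select each `K ∈ 𝒦` independently with probability `p`
(the expectation is written as a sum over selections `σ` weighted by the product Bernoulli
weights). Then the expected number of boundary edges of selected sets is at most
`p·(M/(d·f))·b·|E|`, and the expected number of edges with both endpoints in no selected
set is at most `(1−p)^M·|E|`. -/
theorem stmt16 {V : Type} [Fintype V] [DecidableEq V]
    (G : SimpleGraph V) [DecidableRel G.Adj] (d : ℕ) (hd : 0 < d)
    (hreg : ∀ v : V, G.degree v = d)
    (𝒦 : Finset (Finset V)) (f b M : ℕ) (hf : 0 < f) (hM : 0 < M)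
    (hsize : ∀ K ∈ 𝒦, K.card = f) (hbdry : ∀ K ∈ 𝒦, (bdry G K).card = b)
    (hcover : ∀ v : V, (𝒦.filter (fun K => v ∈ K)).card = M)
    (p : ℝ) (hp0 : 0 ≤ p) (hp1 : p ≤ 1) :
    (∑ σ : {K // K ∈ 𝒦} → Bool,
        (∏ K : {K // K ∈ 𝒦}, if σ K then p else 1 - p) *
          (((oEdges G).filter (fun e =>
              ∃ K : {K // K ∈ 𝒦}, σ K = true ∧ e ∈ bdry G K.1)).card : ℝ)
        ≤ p * ((M : ℝ) / ((d : ℝ) * (f : ℝ))) * (b : ℝ) * ((oEdges G).card : ℝ))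
    ∧
    (∑ σ : {K // K ∈ 𝒦} → Bool,
        (∏ K : {K // K ∈ 𝒦}, if σ K then p else 1 - p) *
          (((oEdges G).filter (fun e =>
              (∀ K : {K // K ∈ 𝒦}, σ K = true → e.1 ∉ K.1) ∧
              (∀ K : {K // K ∈ 𝒦}, σ K = true → e.2 ∉ K.1))).card : ℝ)
        ≤ (1 - p) ^ M * ((oEdges G).card : ℝ)) :=
  stmt16_general G d hd hreg 𝒦 f b M hf hsize hbdry hcover p hp0 hp1
end
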